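/- Let G be a POMDP with absorbing target set T, positive costs, and Supp(λ0) ∈ BeliefWin(G,T). For every k ∈ ℕ, the strategy σ*_k, which plays the allowed-action-restricted finite-horizon optimal strategy σFO_k for the first k steps and thereafter plays σ_Allow, is almost-sure winning for the reachability objective Reach(T). -/

import Mathlib

open Finset Filter
open scoped Classical

set_option linter.unusedSectionVars false

noncomputable section

/-- A finite history of a play: the current state together with the
(reversed) list of past steps; an entry `(a, s')` means: the action `a`
was taken from the state `s'` (leading to the next recorded state). -/
abbrev Hist (S A : Type) := S × List (A × S)

/-- The observation–action sequence of a history. -/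
def obsHist {S A Z : Type} (O : S → Z) (h : Hist S A) : Z × List (A × Z) :=
  (O h.1, h.2.map fun p => (p.1, O p.2))

/-- An observation-based (randomized, history-dependent) strategy. -/
structure Strategy (S A Z : Type) [Fintype A] (O : S → Z) where
  act : Hist S A → A → ℝ
  act_nonneg : ∀ h a, 0 ≤ act h a
  act_sum : ∀ h, ∑ a, act h a = 1
  obsBased : ∀ h h', obsHist O h = obsHist O h' → act h = act h'

/-- A partially observable Markov decision process. -/
structure POMDP (S A Z : Type) [Fintype S] [Fintype A] [Fintype Z] where
  δ : S → A → S → ℝ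
  δ_nonneg : ∀ s a s', 0 ≤ δ s a s'
  δ_sum : ∀ s a, ∑ s', δ s a s' = 1
  obs : S → Z
  init : S → ℝ
  init_nonneg : ∀ s, 0 ≤ init s
  init_sum : ∑ s, init s = 1
  init_obs : ∀ s s', 0 < init s → 0 < init s' → obs s = obs s'

namespace POMDP

variable {S A Z : Type} [Fintype S] [Fintype A] [Fintype Z]

/-- The target set `T` consists of absorbing states. -/
def Absorbing (M : POMDP S A Z) (T : Set S) : Prop :=
  ∀ t ∈ T, ∀ a, M.δ t a t = 1

/-- Probability that after `n` steps the process has followed exactly the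
history `(s, l)` (so `l` has length `n`). -/
def hprobAux (M : POMDP S A Z) (σ : Strategy S A Z M.obs) : ℕ → S → List (A × S) → ℝ
  | 0, s, l => if l = [] then M.init s else 0
  | n+1, s, l =>
    match l with
    | [] => 0
    | (a, s') :: rest => hprobAux M σ n s' rest * σ.act (s', rest) a * M.δ s' a s

def hprob (M : POMDP S A Z) (σ : Strategy S A Z M.obs) (n : ℕ) (h : Hist S A) : ℝ :=
  M.hprobAux σ n h.1 h.2

/-- The state sequence of a history visits the set `T`. -/
def visitsT (T : Set S) (h : Hist S A) : Prop :=
  h.1 ∈ T ∨ ∃ p ∈ h.2, p.2 ∈ T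

/-- Probability of reaching `T` within the first `n` steps. -/
def probReachBy (M : POMDP S A Z) (T : Set S) (σ : Strategy S A Z M.obs) (n : ℕ) : ℝ :=
  ∑' h : Hist S A, if visitsT T h then M.hprob σ n h else 0

/-- Probability of the reachability objective `Reach(T)`. -/
def probReach (M : POMDP S A Z) (T : Set S) (σ : Strategy S A Z M.obs) : ℝ :=
  ⨆ n, M.probReachBy T σ n

/-- The strategy `σ` is almost-sure winning for `Reach(T)`. -/
def AlmostSure (M : POMDP S A Z) (T : Set S) (σ : Strategy S A Z M.obs) : Prop :=
  M.probReach T σ = 1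

/-- Accumulated cost along a history. -/
def totalCostAux (c : S → A → ℝ) : S → List (A × S) → ℝ
  | _, [] => 0
  | _, (a, s') :: rest => totalCostAux c s' rest + c s' a

def totalCostH (c : S → A → ℝ) (h : Hist S A) : ℝ := totalCostAux c h.1 h.2

/-- Expected total cost of the first `n` steps, i.e. `E[Total_{n-1}]`
(in particular `E[Total_k] = expTotalSteps M c σ (k+1)`). -/
def expTotalSteps (M : POMDP S A Z) (c : S → A → ℝ) (σ : Strategy S A Z M.obs) (n : ℕ) : ℝ :=
  ∑' h : Hist S A, M.hprob σ n h * totalCostH c h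

/-- The value `Val(σ) = E[Total]` of a strategy, as the limit (limsup) of the
expected costs of the finite prefixes. -/
def Val (M : POMDP S A Z) (c : S → A → ℝ) (σ : Strategy S A Z M.obs) : EReal :=
  Filter.limsup (fun n => ((M.expTotalSteps c σ n : ℝ) : EReal)) Filter.atTop

/-- `optCost`: the infimum of the values of almost-sure winning strategies. -/
def optCost (M : POMDP S A Z) (T : Set S) (c : S → A → ℝ) : EReal :=
  ⨅ σ : {σ : Strategy S A Z M.obs // M.AlmostSure T σ}, M.Val c σ.1

end POMDP

namespace POMDP

variable {S A Z : Type} [Fintype S] [Fintype A] [Fintype Z]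

/-- Uniform distribution over a finite set of states. -/
def uniformS (U : Finset S) : S → ℝ := fun s => if s ∈ U then ((U.card : ℝ))⁻¹ else 0

lemma uniformS_nonneg (U : Finset S) (s : S) : 0 ≤ uniformS U s := by
  unfold uniformS; split_ifs <;> positivity

lemma uniformS_sum (U : Finset S) (h : U.Nonempty) : ∑ s, uniformS U s = 1 := by
  unfold uniformS
  rw [Finset.sum_ite_mem, Finset.univ_inter, Finset.sum_const, nsmul_eq_mul,
    mul_inv_cancel₀]
  exact_mod_cast Finset.card_ne_zero.mpr h

lemma uniformS_mem {U : Finset S} {s : S} (h : 0 < uniformS U s) : s ∈ U := by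
  by_contra hc; simp [uniformS, hc] at h

/-- The POMDP `M` with the initial distribution replaced by the uniform
distribution over `U`. -/
def reinit (M : POMDP S A Z) (U : Finset S) (hU : U.Nonempty)
    (hobs : ∀ s ∈ U, ∀ s' ∈ U, M.obs s = M.obs s') : POMDP S A Z :=
  { M with
    init := uniformS U
    init_nonneg := uniformS_nonneg U
    init_sum := uniformS_sum U hU
    init_obs := fun s s' hs hs' => hobs s (uniformS_mem hs) s' (uniformS_mem hs') }

/-- The POMDP `M` with the initial distribution replaced by the Dirac
distribution at `s0`. -/
def resetDirac (M : POMDP S A Z) (s0 : S) : POMDP S A Z :=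
  { M with
    init := fun s => if s = s0 then 1 else 0
    init_nonneg := by intro s; split_ifs <;> norm_num
    init_sum := by simp
    init_obs := by
      intro s s' hs hs'
      have h1 : s = s0 := by by_contra hc; simp [hc] at hs
      have h2 : s' = s0 := by by_contra hc; simp [hc] at hs'
      rw [h1, h2] }

/-- The set of almost-sure winning belief-supports: those `U` from which
(with the uniform initial distribution on `U`) some strategy wins
`Reach(T)` almost-surely. -/
def BeliefWin (M : POMDP S A Z) (T : Set S) : Set (Finset S) :=
  {U | ∃ (hU : U.Nonempty) (hobs : ∀ s ∈ U, ∀ s' ∈ U, M.obs s = M.obs s'),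
      ∃ σ : Strategy S A Z M.obs, (M.reinit U hU hobs).AlmostSure T σ}

/-- Belief-support update. -/
def updateF (M : POMDP S A Z) (U : Finset S) (z : Z) (a : A) : Finset S :=
  univ.filter (fun t => M.obs t = z ∧ ∃ s ∈ U, 0 < M.δ s a t)

/-- Allowed actions at a belief-support `U`. -/
def AllowSet (M : POMDP S A Z) (T : Set S) (U : Finset S) : Set A :=
  {a | ∀ z, (M.updateF U z a).Nonempty → M.updateF U z a ∈ M.BeliefWin T}

def allowFin (M : POMDP S A Z) (T : Set S) (U : Finset S) : Finset A :=
  univ.filter (· ∈ M.AllowSet T U)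

/-- The support of the initial distribution, as a belief-support. -/
def suppInitF (M : POMDP S A Z) : Finset S := univ.filter (fun s => 0 < M.init s)

/-- Belief-support after a history, starting from the initial belief-support `U0`. -/
def beliefOfFromAux (M : POMDP S A Z) (U0 : Finset S) : S → List (A × S) → Finset S
  | s, [] => U0.filter (fun t => M.obs t = M.obs s)
  | s, (a, s') :: rest => M.updateF (M.beliefOfFromAux U0 s' rest) (M.obs s) a

def beliefOfFrom (M : POMDP S A Z) (U0 : Finset S) (h : Hist S A) : Finset S :=
  M.beliefOfFromAux U0 h.1 h.2

/-- Belief-support after a history (with the initial belief-support being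
the support of the initial distribution). -/
def beliefOf (M : POMDP S A Z) (h : Hist S A) : Finset S :=
  M.beliefOfFrom M.suppInitF h

lemma beliefOfFromAux_obs (M : POMDP S A Z) (U0 : Finset S) :
    ∀ (l l' : List (A × S)) (s s' : S),
      l.map (fun p => (p.1, M.obs p.2)) = l'.map (fun p => (p.1, M.obs p.2)) →
      M.obs s = M.obs s' →
      M.beliefOfFromAux U0 s l = M.beliefOfFromAux U0 s' l'
  | [], [], s, s', _, hs => by simp [beliefOfFromAux, hs]
  | [], (_ :: _), _, _, hmap, _ => by simp at hmap
  | (_ :: _), [], _, _, hmap, _ => by simp at hmap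
  | ((a, t) :: r), ((a', t') :: r'), s, s', hmap, hs => by
      simp only [List.map_cons, List.cons.injEq, Prod.mk.injEq] at hmap
      obtain ⟨⟨ha, ht⟩, hr⟩ := hmap
      simp only [beliefOfFromAux]
      rw [M.beliefOfFromAux_obs U0 r r' t t' hr ht, hs, ha]

/-- Uniform distribution over a finite set of actions. -/
def uniformA (F : Finset A) : A → ℝ := fun a => if a ∈ F then ((F.card : ℝ))⁻¹ else 0

lemma uniformA_nonneg (F : Finset A) (a : A) : 0 ≤ uniformA F a := by
  unfold uniformA; split_ifs <;> positivity

lemma uniformA_sum (F : Finset A) (h : F.Nonempty) : ∑ a, uniformA F a = 1 := by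
  unfold uniformA
  rw [Finset.sum_ite_mem, Finset.univ_inter, Finset.sum_const, nsmul_eq_mul,
    mul_inv_cancel₀]
  exact_mod_cast Finset.card_ne_zero.mpr h

/-- The action distribution of `σ_Allow` (with initial belief-support `U0`):
uniform over the allowed actions of the current belief-support (with a
uniform fallback where no action is allowed). -/
def actAllowFrom (M : POMDP S A Z) (T : Set S) (U0 : Finset S) (h : Hist S A) : A → ℝ :=
  if (M.allowFin T (M.beliefOfFrom U0 h)).Nonempty
  then uniformA (M.allowFin T (M.beliefOfFrom U0 h))
  else uniformA (univ : Finset A)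

/-- The belief-support based strategy `σ_Allow` (tracking beliefs from `U0`). -/
def stratAllowFrom [Nonempty A] (M : POMDP S A Z) (T : Set S) (U0 : Finset S) :
    Strategy S A Z M.obs where
  act := M.actAllowFrom T U0
  act_nonneg := by
    intro h a; unfold actAllowFrom; split_ifs <;> exact uniformA_nonneg _ _
  act_sum := by
    intro h; unfold actAllowFrom; split_ifs with hne
    · exact uniformA_sum _ hne
    · exact uniformA_sum _ univ_nonempty
  obsBased := by
    intro h h' hobs
    have : M.beliefOfFrom U0 h = M.beliefOfFrom U0 h' := by
      unfold beliefOfFrom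
      exact M.beliefOfFromAux_obs U0 h.2 h'.2 h.1 h'.1
        (congrArg Prod.snd hobs) (congrArg Prod.fst hobs)
    unfold actAllowFrom
    rw [this]

/-- `σ_Allow`. -/
def stratAllow [Nonempty A] (M : POMDP S A Z) (T : Set S) : Strategy S A Z M.obs :=
  M.stratAllowFrom T M.suppInitF

/-- `T_Allow(s, U)`: the expected total cost of `σ_Allow` started in the
state `s` with the initial belief-support `U`. -/
def TAllow [Nonempty A] (M : POMDP S A Z) (T : Set S) (c : S → A → ℝ) (s : S) (U : Finset S) :
    EReal :=
  (M.resetDirac s).Val c (M.stratAllowFrom T U)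

/-- `U_Allow`: the maximal expected total cost of `σ_Allow` over all
almost-sure winning belief-supports `U` and states `s ∈ U`. -/
def UAllow [Nonempty A] (M : POMDP S A Z) (T : Set S) (c : S → A → ℝ) : EReal :=
  ⨆ U ∈ M.BeliefWin T, ⨆ s ∈ U, M.TAllow T c s U

end POMDP

namespace POMDP

variable {S A Z : Type} [Fintype S] [Fintype A] [Fintype Z]

/-- Normalization of a nonnegative function into a distribution. -/
def normalize (f : S → ℝ) : S → ℝ := fun t => f t / ∑ u, f u

/-- Support of an information state. -/
def suppF (b : S → ℝ) : Finset S := univ.filter (fun s => b s ≠ 0)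

/-- The information state (posterior distribution) after a history. -/
def infoOfAux (M : POMDP S A Z) : S → List (A × S) → S → ℝ
  | s, [] => normalize (fun t => if M.obs t = M.obs s then M.init t else 0)
  | s, (a, s') :: rest =>
      normalize (fun t => if M.obs t = M.obs s then ∑ u, M.infoOfAux s' rest u * M.δ u a t else 0)

def infoOf (M : POMDP S A Z) (h : Hist S A) : S → ℝ := M.infoOfAux h.1 h.2

lemma infoOfAux_obs (M : POMDP S A Z) :
    ∀ (l l' : List (A × S)) (s s' : S),
      l.map (fun p => (p.1, M.obs p.2)) = l'.map (fun p => (p.1, M.obs p.2)) →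
      M.obs s = M.obs s' →
      M.infoOfAux s l = M.infoOfAux s' l'
  | [], [], s, s', _, hs => by simp [infoOfAux, hs]
  | [], (_ :: _), _, _, hmap, _ => by simp at hmap
  | (_ :: _), [], _, _, hmap, _ => by simp at hmap
  | ((a, t) :: r), ((a', t') :: r'), s, s', hmap, hs => by
      simp only [List.map_cons, List.cons.injEq, Prod.mk.injEq] at hmap
      obtain ⟨⟨ha, ht⟩, hr⟩ := hmap
      simp only [infoOfAux]
      rw [M.infoOfAux_obs r r' t t' hr ht, hs, ha]

/-- Expected one-step cost `c'(b,a)` at an information state. -/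
def cinfo (c : S → A → ℝ) (b : S → ℝ) (a : A) : ℝ := ∑ s, b s * c s a

/-- Probability of observing `z` after playing `a` at information state `b`. -/
def obsProb (M : POMDP S A Z) (b : S → ℝ) (a : A) (z : Z) : ℝ :=
  ∑ t, if M.obs t = z then ∑ u, b u * M.δ u a t else 0

/-- Bayesian update of the information state `b` under action `a` and
observation `z`. -/
def postInfo (M : POMDP S A Z) (b : S → ℝ) (a : A) (z : Z) : S → ℝ :=
  normalize (fun t => if M.obs t = z then ∑ u, b u * M.δ u a t else 0)

/-- The allowed-action-restricted finite-horizon value iteration `V*_n`. -/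
def Vstar (M : POMDP S A Z) (T : Set S) (c : S → A → ℝ) : ℕ → (S → ℝ) → ℝ
  | 0, _ => 0
  | n+1, b =>
    if h : (M.allowFin T (suppF b)).Nonempty then
      (M.allowFin T (suppF b)).inf' h
        (fun a => cinfo c b a + ∑ z, M.obsProb b a z * M.Vstar T c n (M.postInfo b a z))
    else 0

/-- An allowed action attaining the minimum of the value iteration with
`n` steps remaining at information state `b`. -/
def foAct [Nonempty A] (M : POMDP S A Z) (T : Set S) (c : S → A → ℝ) : ℕ → (S → ℝ) → A
  | 0, _ => Classical.arbitrary A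
  | n+1, b =>
    if h : (M.allowFin T (suppF b)).Nonempty then
      Classical.choose (Finset.exists_mem_eq_inf' h
        (fun a => cinfo c b a + ∑ z, M.obsProb b a z * M.Vstar T c n (M.postInfo b a z)))
    else Classical.arbitrary A

/-- The action distribution of the finite-horizon optimal strategy `σFO_k`. -/
def actFO [Nonempty A] (M : POMDP S A Z) (T : Set S) (c : S → A → ℝ) (k : ℕ) (h : Hist S A) :
    A → ℝ :=
  fun a => if a = M.foAct T c (k - h.2.length) (M.infoOf h) then 1 else 0

lemma length_eq_of_obsHist {h h' : Hist S A} {O : S → Z} (he : obsHist O h = obsHist O h') :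
    h.2.length = h'.2.length := by
  have := congrArg (fun x => (Prod.snd x).length) he
  simpa [obsHist] using this

/-- The (allowed-action-restricted) finite-horizon optimal strategy `σFO_k`. -/
def stratFO [Nonempty A] (M : POMDP S A Z) (T : Set S) (c : S → A → ℝ) (k : ℕ) :
    Strategy S A Z M.obs where
  act := M.actFO T c k
  act_nonneg := by intro h a; unfold actFO; split_ifs <;> norm_num
  act_sum := by intro h; unfold actFO; simp
  obsBased := by
    intro h h' hobs
    have hlen : h.2.length = h'.2.length := length_eq_of_obsHist hobs
    have hinfo : M.infoOf h = M.infoOf h' := by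
      unfold infoOf
      exact M.infoOfAux_obs h.2 h'.2 h.1 h'.1
        (congrArg Prod.snd hobs) (congrArg Prod.fst hobs)
    unfold actFO
    rw [hlen, hinfo]

/-- The strategy `σ*_k`: play `σFO_k` for the first `k` steps, then `σ_Allow`. -/
def stratStar [Nonempty A] (M : POMDP S A Z) (T : Set S) (c : S → A → ℝ) (k : ℕ) :
    Strategy S A Z M.obs where
  act := fun h =>
    if h.2.length < k then M.actFO T c k h else M.actAllowFrom T M.suppInitF h
  act_nonneg := by
    intro h a; split_ifs with hl
    · exact (M.stratFO T c k).act_nonneg h a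
    · exact (M.stratAllowFrom T M.suppInitF).act_nonneg h a
  act_sum := by
    intro h; split_ifs with hl
    · exact (M.stratFO T c k).act_sum h
    · exact (M.stratAllowFrom T M.suppInitF).act_sum h
  obsBased := by
    intro h h' hobs
    have hlen : h.2.length = h'.2.length := length_eq_of_obsHist hobs
    rw [hlen]
    split_ifs with hl
    · exact (M.stratFO T c k).obsBased h h' hobs
    · exact (M.stratAllowFrom T M.suppInitF).obsBased h h' hobs

/-- `α_k`: the probability that `T` is not reached within the first `k`
steps when playing `σ*_k`. -/
def alphaK [Nonempty A] (M : POMDP S A Z) (T : Set S) (c : S → A → ℝ) (k : ℕ) : ℝ :=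
  1 - M.probReachBy T (M.stratStar T c k) k

end POMDP

/-
Along every positive-probability history of `σ*_k` the belief-support stays almost-sure winning:
both `σFO_k` and `σ_Allow` choose only allowed actions (for `σFO_k` because the support of the
information state is the belief-support). On the other hand, an almost-sure winning strategy only
plays allowed actions (this uses that `T` is absorbing), so `σ_Allow`, which plays each allowed
action with positive probability, reaches `T` with positive probability from every winning
belief-support `B` and state `t ∈ B`. There are finitely many such pairs `(B, t)`, hence `N` and
`p < 1` such that from each of them `σ_Allow` avoids `T` for `N` steps with probability at most
`p`. By the Markov property the probability that `σ*_k` avoids `T` for `k + m * N` steps is at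
most `p ^ m`.
-/

open Topology

-- Makes a strategy for `M` a strategy for `M.resetDirac t` and `M.reinit U _ _` also at reducible
-- transparency (their observation functions agree definitionally).
attribute [reducible] POMDP.resetDirac POMDP.reinit

theorem tendsto_zero_of_const_mul_le {α : Type*} {l : Filter α} {f g : α → ℝ} {c : ℝ}
    (hc : 0 < c) (hf : ∀ x, 0 ≤ f x) (hfg : ∀ x, c * f x ≤ g x) (hg : Tendsto g l (𝓝 0)) :
    Tendsto f l (𝓝 0) := by
  have : Tendsto (fun x => c⁻¹ * g x) l (𝓝 0) := by simpa using hg.const_mul c⁻¹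
  exact squeeze_zero hf (fun x => (le_inv_mul_iff₀ hc).mpr (hfg x)) this

theorem tendsto_zero_of_antitone_of_le {f g : ℕ → ℝ} (hf : Antitone f) (h0 : ∀ n, 0 ≤ f n)
    (hg : Tendsto g atTop (𝓝 0)) {φ : ℕ → ℕ} (hfg : ∀ m, f (φ m) ≤ g m) :
    Tendsto f atTop (𝓝 0) := by
  have hbdd : BddBelow (Set.range f) := ⟨0, by rintro _ ⟨n, rfl⟩; exact h0 n⟩
  have hinf : ⨅ n, f n = 0 :=
    le_antisymm (ge_of_tendsto' hg fun m => (ciInf_le hbdd (φ m)).trans (hfg m)) (le_ciInf h0)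
  exact hinf ▸ tendsto_atTop_ciInf hf hbdd

theorem exists_uniform_lt_one {ι : Type*} [Finite ι] {P : ι → Prop} {f : ι → ℕ → ℝ}
    (hf : ∀ i, Antitone (f i)) (h : ∀ i, P i → ∃ n, f i n < 1) :
    ∃ N : ℕ, ∃ p : ℝ, 0 ≤ p ∧ p < 1 ∧ ∀ i, P i → f i N ≤ p := by
  have := Fintype.ofFinite ι
  choose! n hn using h
  set N := univ.sup n
  have hN : ∀ i, P i → f i N < 1 := fun i hi => (hf i (le_sup (mem_univ i))).trans_lt (hn i hi)
  obtain ⟨p, hp1, hp⟩ : ∃ p < 1, ∀ i, P i → f i N ≤ p := by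
    rcases (univ.filter P).eq_empty_or_nonempty with hs | hs
    · exact ⟨0, one_pos, fun i hi => absurd (mem_filter.mpr ⟨mem_univ i, hi⟩) (hs ▸ notMem_empty i)⟩
    · exact ⟨(univ.filter P).sup' hs (f · N),
        (sup'_lt_iff hs).mpr fun i hi => hN i (mem_filter.mp hi).2,
        fun i hi => le_sup' (f · N) (mem_filter.mpr ⟨mem_univ i, hi⟩)⟩
  exact ⟨N, max p 0, le_max_right _ _, max_lt hp1 one_pos,
    fun i hi => (hp i hi).trans (le_max_left _ _)⟩

section Strategies

variable {S A Z : Type} [Fintype A] {O : S → Z}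

@[ext]
theorem Strategy.ext {σ₁ σ₂ : Strategy S A Z O} (h : σ₁.act = σ₂.act) : σ₁ = σ₂ := by
  cases σ₁; cases σ₂; congr

/-- The continuation of `σ` after the past `l₀`. Histories list the most recent step first, so the
past is a suffix: `(s, l)` is read as `(s, l ++ l₀)`. -/
def shiftStrat (σ : Strategy S A Z O) (l₀ : List (A × S)) : Strategy S A Z O where
  act h := σ.act (h.1, h.2 ++ l₀)
  act_nonneg h := σ.act_nonneg _
  act_sum h := σ.act_sum _
  obsBased h h' he := σ.obsBased _ _ <| by
    simp only [obsHist, Prod.mk.injEq, List.map_append] at he ⊢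
    exact ⟨he.1, by rw [he.2]⟩

@[simp]
theorem shiftStrat_act (σ : Strategy S A Z O) (l₀ : List (A × S)) (h : Hist S A) :
    (shiftStrat σ l₀).act h = σ.act (h.1, h.2 ++ l₀) :=
  rfl

theorem shiftStrat_congr (σ : Strategy S A Z O) {l l' : List (A × S)}
    (hl : l.map (fun p => (p.1, O p.2)) = l'.map (fun p => (p.1, O p.2))) :
    shiftStrat σ l = shiftStrat σ l' := by
  ext : 1
  funext h
  exact σ.obsBased _ _ (by simp only [obsHist, List.map_append, hl])

end Strategies

namespace POMDP

variable {S A Z : Type} [Fintype S] [Fintype A] [Fintype Z]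

section FiniteHistories

def listsN : ℕ → Finset (List (A × S))
  | 0 => {[]}
  | n + 1 => ((univ : Finset (A × S)) ×ˢ listsN n).image fun p => p.1 :: p.2

theorem mem_listsN : ∀ {n : ℕ} {l : List (A × S)}, l ∈ listsN n ↔ l.length = n
  | 0, l => by cases l <;> simp [listsN]
  | n + 1, [] => by simp [listsN]
  | n + 1, p :: l => by simp [listsN, mem_listsN]

def histN (n : ℕ) : Finset (Hist S A) := (univ : Finset S) ×ˢ listsN n

theorem mem_histN {n : ℕ} {h : Hist S A} : h ∈ histN n ↔ h.2.length = n := by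
  simp [histN, mem_listsN]

theorem sum_histN (n : ℕ) (f : Hist S A → ℝ) :
    ∑ h ∈ histN n, f h = ∑ s : S, ∑ l ∈ listsN n, f (s, l) :=
  Finset.sum_product _ _ _

theorem sum_listsN_succ (n : ℕ) (g : List (A × S) → ℝ) :
    ∑ l ∈ listsN (n + 1), g l = ∑ p : A × S, ∑ l ∈ listsN n, g (p :: l) := by
  rw [listsN, Finset.sum_image (by simp), Finset.sum_product]

theorem sum_listsN_add (m n : ℕ) (g : List (A × S) → ℝ) :
    ∑ l ∈ listsN (m + n), g l = ∑ l ∈ listsN m, ∑ l₀ ∈ listsN n, g (l ++ l₀) := by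
  rw [← Finset.sum_product']
  refine Finset.sum_nbij' (fun l => (l.take m, l.drop m)) (fun p => p.1 ++ p.2)
    ?_ ?_ (fun l _ => List.take_append_drop m l) ?_ (fun l _ => by rw [List.take_append_drop])
  · intro l hl
    simp only [mem_product, mem_listsN, List.length_take, List.length_drop] at hl ⊢
    omega
  · intro p hp
    simp only [mem_product, mem_listsN, List.length_append] at hp ⊢
    omega
  · rintro ⟨l, l₀⟩ hp
    simp only [mem_product, mem_listsN] at hp
    simp [← hp.1]

end FiniteHistories

section HistoryProbability

variable (M : POMDP S A Z) (σ : Strategy S A Z M.obs)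

@[simp]
theorem hprob_zero (h : Hist S A) : M.hprob σ 0 h = if h.2 = [] then M.init h.1 else 0 := rfl

@[simp]
theorem hprob_succ_nil (n : ℕ) (s : S) : M.hprob σ (n + 1) (s, []) = 0 := rfl

@[simp]
theorem hprob_succ_cons (n : ℕ) (s : S) (a : A) (u : S) (r : List (A × S)) :
    M.hprob σ (n + 1) (s, (a, u) :: r) = M.hprob σ n (u, r) * σ.act (u, r) a * M.δ u a s :=
  rfl

theorem hprob_nonneg : ∀ (n : ℕ) (h : Hist S A), 0 ≤ M.hprob σ n h
  | 0, (s, l) => by simp only [hprob_zero]; split_ifs <;> simp [M.init_nonneg]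
  | n + 1, (s, []) => le_rfl
  | n + 1, (s, (a, u) :: r) => by
    rw [hprob_succ_cons]
    exact mul_nonneg (mul_nonneg (hprob_nonneg n _) (σ.act_nonneg _ _)) (M.δ_nonneg _ _ _)

theorem hprob_eq_zero_of_length_ne : ∀ {n : ℕ} {h : Hist S A}, h.2.length ≠ n → M.hprob σ n h = 0
  | 0, (s, l), hl => by simp_all
  | n + 1, (s, []), _ => rfl
  | n + 1, (s, (a, u) :: r), hl => by
    rw [hprob_succ_cons, hprob_eq_zero_of_length_ne (by simpa using hl), zero_mul, zero_mul]

def PosHist (h : Hist S A) : Prop := M.hprob σ h.2.length h ≠ 0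

variable {M σ}

@[simp]
theorem posHist_nil {s : S} : M.PosHist σ (s, []) ↔ M.init s ≠ 0 := by
  simp [PosHist]

@[simp]
theorem posHist_cons {s : S} {a : A} {u : S} {r : List (A × S)} :
    M.PosHist σ (s, (a, u) :: r) ↔ M.PosHist σ (u, r) ∧ σ.act (u, r) a ≠ 0 ∧ M.δ u a s ≠ 0 := by
  simp [PosHist, and_assoc]

theorem hprob_ne_zero_iff {n : ℕ} {h : Hist S A} :
    M.hprob σ n h ≠ 0 ↔ h.2.length = n ∧ M.PosHist σ h := by
  constructor
  · intro hne
    obtain rfl : h.2.length = n := by_contra fun hl => hne (M.hprob_eq_zero_of_length_ne σ hl)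
    exact ⟨rfl, hne⟩
  · rintro ⟨rfl, hpos⟩
    exact hpos

def startOf : S → List (A × S) → S
  | s, [] => s
  | _, (_, u) :: r => startOf u r

@[simp] theorem startOf_nil (s : S) : startOf (A := A) s [] = s := rfl

@[simp] theorem startOf_cons (s : S) (a : A) (u : S) (r : List (A × S)) :
    startOf s ((a, u) :: r) = startOf u r := rfl

theorem startOf_eq_of_posHist_resetDirac {t : S} :
    ∀ {s : S} {l : List (A × S)}, (M.resetDirac t).PosHist σ (s, l) → startOf s l = t
  | s, [], h => by simpa [resetDirac] using h
  | s, (a, u) :: r, h => startOf_eq_of_posHist_resetDirac (s := u) (l := r) (posHist_cons.mp h).1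

theorem PosHist.of_resetDirac {t : S} (ht : M.init t ≠ 0) :
    ∀ {s : S} {l : List (A × S)}, (M.resetDirac t).PosHist σ (s, l) → M.PosHist σ (s, l)
  | s, [], h => by
    obtain rfl : s = t := by simpa [resetDirac] using h
    exact posHist_nil.mpr ht
  | s, (a, u) :: r, h => by
    obtain ⟨hr, ha, hδ⟩ := posHist_cons.mp h
    exact posHist_cons.mpr ⟨PosHist.of_resetDirac ht hr, ha, hδ⟩

theorem hprob_resetDirac_eq_zero {t : S} {n : ℕ} {s : S} {l : List (A × S)}
    (h : startOf s l ≠ t) : (M.resetDirac t).hprob σ n (s, l) = 0 :=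
  by_contra fun hne => h (startOf_eq_of_posHist_resetDirac (hprob_ne_zero_iff.mp hne).2)

theorem hprob_resetDirac_congr {t : S} {σ₁ σ₂ : Strategy S A Z M.obs}
    (hact : ∀ s l, startOf s l = t → σ₁.act (s, l) = σ₂.act (s, l)) :
    ∀ (n : ℕ) (s : S) (l : List (A × S)),
      (M.resetDirac t).hprob σ₁ n (s, l) = (M.resetDirac t).hprob σ₂ n (s, l)
  | 0, _, _ => rfl
  | _ + 1, _, [] => rfl
  | n + 1, s, (a, u) :: r => by
    simp only [hprob_succ_cons]
    by_cases hst : startOf u r = t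
    · rw [hprob_resetDirac_congr hact n u r, hact u r hst]
    · simp [hprob_resetDirac_eq_zero hst]

variable (M σ)

theorem hprob_eq_init_mul : ∀ (n : ℕ) (s : S) (l : List (A × S)),
    M.hprob σ n (s, l) = M.init (startOf s l) * (M.resetDirac (startOf s l)).hprob σ n (s, l)
  | 0, s, [] => by simp
  | 0, s, _ :: _ => by simp
  | n + 1, s, [] => by simp
  | n + 1, s, (a, u) :: r => by
    simp only [hprob_succ_cons, startOf_cons, hprob_eq_init_mul n u r]
    ring

theorem sum_mul_hprob_resetDirac (g : S → ℝ) (n : ℕ) (s : S) (l : List (A × S)) :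
    ∑ t, g t * (M.resetDirac t).hprob σ n (s, l) =
      g (startOf s l) * (M.resetDirac (startOf s l)).hprob σ n (s, l) :=
  Finset.sum_eq_single _ (fun t _ ht => by rw [hprob_resetDirac_eq_zero (Ne.symm ht), mul_zero])
    (by simp)

theorem hprob_eq_sum_init_mul (n : ℕ) (s : S) (l : List (A × S)) :
    M.hprob σ n (s, l) = ∑ t, M.init t * (M.resetDirac t).hprob σ n (s, l) := by
  rw [sum_mul_hprob_resetDirac, hprob_eq_init_mul]

theorem sum_hprob_histN : ∀ n : ℕ, ∑ h ∈ histN n, M.hprob σ n h = 1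
  | 0 => by simpa [sum_histN, listsN] using M.init_sum
  | n + 1 => by
    have step : ∀ (u : S) (l : List (A × S)),
        ∑ s : S, ∑ a : A, M.hprob σ n (u, l) * σ.act (u, l) a * M.δ u a s = M.hprob σ n (u, l) := by
      intro u l
      rw [Finset.sum_comm]
      simp only [← Finset.mul_sum, M.δ_sum, mul_one, σ.act_sum]
    rw [← sum_hprob_histN n, sum_histN, sum_histN]
    simp only [sum_listsN_succ, Fintype.sum_prod_type, hprob_succ_cons]
    calc _ = ∑ s : S, ∑ u : S, ∑ l ∈ listsN n, ∑ a : A,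
          M.hprob σ n (u, l) * σ.act (u, l) a * M.δ u a s :=
          Finset.sum_congr rfl fun s _ => by
            rw [Finset.sum_comm]; exact Finset.sum_congr rfl fun u _ => Finset.sum_comm
      _ = ∑ u : S, ∑ l ∈ listsN n, ∑ s : S, ∑ a : A,
          M.hprob σ n (u, l) * σ.act (u, l) a * M.δ u a s := by
          rw [Finset.sum_comm]; exact Finset.sum_congr rfl fun u _ => Finset.sum_comm
      _ = _ := by simp only [step]

theorem hprob_append (l₀ : List (A × S)) : ∀ (s : S) (l : List (A × S)),
    M.hprob σ (l.length + l₀.length) (s, l ++ l₀) =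
      (M.resetDirac (startOf s l)).hprob (shiftStrat σ l₀) l.length (s, l) *
        M.hprob σ l₀.length (startOf s l, l₀)
  | s, [] => by simp
  | s, (a, u) :: r => by
    rw [List.cons_append, List.length_cons, Nat.add_right_comm, hprob_succ_cons, hprob_succ_cons,
      hprob_append l₀ u r, startOf_cons, shiftStrat_act]
    ring

end HistoryProbability

section Avoidance

variable (M : POMDP S A Z) (T : Set S) (σ : Strategy S A Z M.obs)

def probAvoidBy (n : ℕ) : ℝ := ∑ h ∈ histN n, if visitsT T h then 0 else M.hprob σ n h

theorem probAvoidBy_nonneg (n : ℕ) : 0 ≤ M.probAvoidBy T σ n :=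
  Finset.sum_nonneg fun h _ => by split_ifs <;> simp [hprob_nonneg]

theorem probReachBy_eq_sum (n : ℕ) :
    M.probReachBy T σ n = ∑ h ∈ histN n, if visitsT T h then M.hprob σ n h else 0 :=
  tsum_eq_sum fun h hh => by
    rw [M.hprob_eq_zero_of_length_ne σ (mem_histN.not.mp hh), ite_self]

theorem probReachBy_add_probAvoidBy (n : ℕ) :
    M.probReachBy T σ n + M.probAvoidBy T σ n = 1 := by
  rw [probReachBy_eq_sum, probAvoidBy, ← Finset.sum_add_distrib, ← M.sum_hprob_histN σ n]
  exact Finset.sum_congr rfl fun h _ => by split_ifs <;> simp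

theorem probAvoidBy_le_one (n : ℕ) : M.probAvoidBy T σ n ≤ 1 := by
  have : 0 ≤ M.probReachBy T σ n := tsum_nonneg fun h => by split_ifs <;> simp [hprob_nonneg]
  linarith [M.probReachBy_add_probAvoidBy T σ n]

variable {T}

theorem visitsT_cons {s : S} {a : A} {u : S} {r : List (A × S)} :
    visitsT T (s, (a, u) :: r) ↔ s ∈ T ∨ visitsT T (u, r) := by
  simp [visitsT]

theorem visitsT_append : ∀ {s : S} {l : List (A × S)} {l₀ : List (A × S)},
    visitsT T (s, l ++ l₀) ↔ visitsT T (s, l) ∨ visitsT T (startOf s l, l₀)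
  | s, [], l₀ => by simp [visitsT]
  | s, (a, u) :: r, l₀ => by
    rw [List.cons_append, visitsT_cons, visitsT_cons, visitsT_append, startOf_cons, or_assoc]

theorem visitsT_of_startOf_mem {s : S} {l : List (A × S)} (h : startOf s l ∈ T) :
    visitsT T (s, l) := by
  simpa using (visitsT_append (l₀ := [])).mpr (Or.inr (Or.inl h))

theorem ite_visitsT_hprob_append (s : S) (l l₀ : List (A × S)) :
    (if visitsT T (s, l ++ l₀) then 0
      else M.hprob σ (l.length + l₀.length) (s, l ++ l₀)) =
    ∑ t, (if visitsT T (t, l₀) then 0 else M.hprob σ l₀.length (t, l₀)) *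
      (if visitsT T (s, l) then 0
        else (M.resetDirac t).hprob (shiftStrat σ l₀) l.length (s, l)) := by
  by_cases hv : visitsT T (s, l)
  · simp [hv, visitsT_append]
  · simp only [hv, if_false, visitsT_append, false_or]
    rw [sum_mul_hprob_resetDirac (g := fun t => if visitsT T (t, l₀) then 0
      else M.hprob σ l₀.length (t, l₀)), hprob_append]
    split_ifs <;> ring

/-- The Markov property at time `n`. -/
theorem probAvoidBy_add (m n : ℕ) :
    M.probAvoidBy T σ (m + n) = ∑ h ∈ histN n, if visitsT T h then 0
      else M.hprob σ n h * (M.resetDirac h.1).probAvoidBy T (shiftStrat σ h.2) m := by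
  calc M.probAvoidBy T σ (m + n)
      = ∑ h ∈ histN m, ∑ h₀ ∈ histN n,
          (if visitsT T h₀ then 0 else M.hprob σ n h₀) *
          (if visitsT T h then 0 else (M.resetDirac h₀.1).hprob (shiftStrat σ h₀.2) m h) := by
        simp only [probAvoidBy, sum_histN]
        refine Finset.sum_congr rfl fun s _ => ?_
        rw [sum_listsN_add]
        refine Finset.sum_congr rfl fun l hl => ?_
        rw [Finset.sum_comm]
        refine Finset.sum_congr rfl fun l₀ hl₀ => ?_
        rw [mem_listsN] at hl hl₀
        subst hl hl₀
        exact M.ite_visitsT_hprob_append σ s l l₀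
    _ = ∑ h₀ ∈ histN n, (if visitsT T h₀ then 0 else M.hprob σ n h₀) *
          ∑ h ∈ histN m, (if visitsT T h then 0
            else (M.resetDirac h₀.1).hprob (shiftStrat σ h₀.2) m h) := by
        rw [Finset.sum_comm]
        simp only [Finset.mul_sum]
    _ = _ := Finset.sum_congr rfl fun h₀ _ => by
        rw [probAvoidBy]
        split_ifs <;> simp

variable {M σ}

theorem probAvoidBy_resetDirac_of_mem {t : S} (ht : t ∈ T) (n : ℕ) :
    (M.resetDirac t).probAvoidBy T σ n = 0 :=
  Finset.sum_eq_zero fun h _ => by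
    rw [ite_eq_left_iff]
    intro hv
    exact hprob_resetDirac_eq_zero fun hst => hv (visitsT_of_startOf_mem (hst ▸ ht))

theorem probAvoidBy_resetDirac_congr {t : S} {σ₁ σ₂ : Strategy S A Z M.obs}
    (hact : ∀ s l, startOf s l = t → σ₁.act (s, l) = σ₂.act (s, l)) (n : ℕ) :
    (M.resetDirac t).probAvoidBy T σ₁ n = (M.resetDirac t).probAvoidBy T σ₂ n :=
  sum_congr rfl fun h _ => by rw [hprob_resetDirac_congr hact n h.1 h.2]

theorem probAvoidBy_lt_one_iff {σ : Strategy S A Z M.obs} {n : ℕ} :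
    M.probAvoidBy T σ n < 1 ↔ ∃ h ∈ histN n, visitsT T h ∧ M.PosHist σ h := by
  have hsum := M.probReachBy_add_probAvoidBy T σ n
  rw [show M.probAvoidBy T σ n < 1 ↔ 0 < M.probReachBy T σ n by constructor <;> intro <;> linarith,
    probReachBy_eq_sum, sum_pos_iff_of_nonneg fun h _ => by split_ifs <;> simp [hprob_nonneg]]
  refine exists_congr fun h => and_congr_right fun hh => ?_
  rw [mem_histN] at hh
  split_ifs with hv
  · simp [hv, (hprob_nonneg ..).lt_iff_ne', PosHist, hh]
  · simp [hv]

theorem probAvoidBy_add_le_mul {m n : ℕ} {c : ℝ}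
    (hc : ∀ h ∈ histN n, M.PosHist σ h → ¬ visitsT T h →
      (M.resetDirac h.1).probAvoidBy T (shiftStrat σ h.2) m ≤ c) :
    M.probAvoidBy T σ (m + n) ≤ c * M.probAvoidBy T σ n := by
  rw [probAvoidBy_add, probAvoidBy, Finset.mul_sum]
  refine Finset.sum_le_sum fun h hh => ?_
  split_ifs with hv
  · simp
  · by_cases h0 : M.hprob σ n h = 0
    · simp [h0]
    · rw [mul_comm c]
      exact mul_le_mul_of_nonneg_left (hc h hh (hprob_ne_zero_iff.mp h0).2 hv)
        (M.hprob_nonneg σ n h)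

variable (M T σ) in
theorem probAvoidBy_antitone : Antitone (M.probAvoidBy T σ) := by
  refine antitone_nat_of_succ_le fun n => ?_
  simpa [add_comm] using probAvoidBy_add_le_mul (M := M) (T := T) (σ := σ) (m := 1) (n := n)
    (c := 1) fun h _ _ _ => probAvoidBy_le_one _ _ _ _

theorem hprob_mul_probAvoidBy_shiftStrat_le {m n : ℕ} {h : Hist S A} (hh : h ∈ histN n)
    (hv : ¬ visitsT T h) :
    M.hprob σ n h * (M.resetDirac h.1).probAvoidBy T (shiftStrat σ h.2) m ≤
      M.probAvoidBy T σ (m + n) := by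
  rw [probAvoidBy_add]
  have := Finset.single_le_sum (f := fun h : Hist S A => if visitsT T h then 0
    else M.hprob σ n h * (M.resetDirac h.1).probAvoidBy T (shiftStrat σ h.2) m)
    (fun h _ => by split_ifs; exacts [le_rfl, mul_nonneg (hprob_nonneg ..) (probAvoidBy_nonneg ..)])
    hh
  rwa [if_neg hv] at this

variable (M σ) in
theorem probAvoidBy_eq_sum_init (n : ℕ) :
    M.probAvoidBy T σ n = ∑ t, M.init t * (M.resetDirac t).probAvoidBy T σ n := by
  simp only [probAvoidBy, Finset.mul_sum]
  rw [Finset.sum_comm]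
  refine Finset.sum_congr rfl fun h _ => ?_
  split_ifs
  · simp
  · exact M.hprob_eq_sum_init_mul σ n h.1 h.2

theorem almostSure_iff_tendsto :
    M.AlmostSure T σ ↔ Tendsto (M.probAvoidBy T σ) atTop (𝓝 0) := by
  have hreach : M.probReachBy T σ = fun n => 1 - M.probAvoidBy T σ n :=
    funext fun n => by linarith [M.probReachBy_add_probAvoidBy T σ n]
  have hlim : Tendsto (M.probReachBy T σ) atTop (𝓝 (M.probReach T σ)) := by
    refine tendsto_atTop_ciSup (fun a b hab => ?_) ⟨1, ?_⟩
    · rw [hreach]; linarith [probAvoidBy_antitone M T σ hab]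
    · rintro _ ⟨n, rfl⟩; rw [hreach]; linarith [M.probAvoidBy_nonneg T σ n]
  have hiff : Tendsto (M.probAvoidBy T σ) atTop (𝓝 0) ↔
      Tendsto (M.probReachBy T σ) atTop (𝓝 1) := by
    rw [hreach]
    refine ⟨fun h => by simpa using h.const_sub 1, fun h => by simpa using h.const_sub 1⟩
  rw [hiff, AlmostSure]
  exact ⟨fun h => h ▸ hlim, tendsto_nhds_unique hlim⟩

theorem tendsto_probAvoidBy_iff_resetDirac :
    Tendsto (M.probAvoidBy T σ) atTop (𝓝 0) ↔
      ∀ t, M.init t ≠ 0 → Tendsto ((M.resetDirac t).probAvoidBy T σ) atTop (𝓝 0) := by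
  rw [funext (M.probAvoidBy_eq_sum_init σ)]
  constructor
  · intro h t ht
    refine tendsto_zero_of_const_mul_le ((M.init_nonneg t).lt_of_ne' ht)
      (fun _ => probAvoidBy_nonneg ..) (fun n => ?_) h
    exact Finset.single_le_sum (f := fun t => M.init t * (M.resetDirac t).probAvoidBy T σ n)
      (fun t _ => mul_nonneg (M.init_nonneg t) (probAvoidBy_nonneg ..)) (mem_univ t)
  · intro h
    rw [show (0 : ℝ) = ∑ t : S, M.init t * 0 by simp]
    refine tendsto_finsetSum _ fun t _ => ?_
    by_cases ht : M.init t = 0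
    · simp [ht]
    · exact (h t ht).const_mul _

theorem tendsto_probAvoidBy_shiftStrat (hw : Tendsto (M.probAvoidBy T σ) atTop (𝓝 0))
    {h : Hist S A} (hpos : M.PosHist σ h) (hv : ¬ visitsT T h) :
    Tendsto ((M.resetDirac h.1).probAvoidBy T (shiftStrat σ h.2)) atTop (𝓝 0) :=
  tendsto_zero_of_const_mul_le ((hprob_nonneg ..).lt_of_ne' hpos) (fun _ => probAvoidBy_nonneg ..)
    (fun _ => hprob_mul_probAvoidBy_shiftStrat_le (mem_histN.mpr rfl) hv)
    ((tendsto_add_atTop_iff_nat h.2.length).mpr hw)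

end Avoidance

section BeliefSupports

variable {M : POMDP S A Z} {T : Set S} {σ : Strategy S A Z M.obs}

theorem Absorbing.eq_of_δ_ne_zero (habs : M.Absorbing T) {t s : S} {a : A} (ht : t ∈ T)
    (hδ : M.δ t a s ≠ 0) : s = t := by
  by_contra hne
  have hsum := Finset.add_sum_erase univ (M.δ t a) (mem_univ t)
  rw [M.δ_sum, habs t ht a, add_eq_left] at hsum
  exact hδ ((sum_eq_zero_iff_of_nonneg fun _ _ => M.δ_nonneg ..).mp hsum s
    (mem_erase.mpr ⟨hne, mem_univ s⟩))

theorem Absorbing.mem_of_posHist_of_visitsT (habs : M.Absorbing T) :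
    ∀ {s : S} {l : List (A × S)}, M.PosHist σ (s, l) → visitsT T (s, l) → s ∈ T
  | s, [], _, hv => by simpa [visitsT] using hv
  | s, (a, u) :: r, hpos, hv => by
    obtain ⟨hr, -, hδ⟩ := posHist_cons.mp hpos
    refine (visitsT_cons.mp hv).elim id fun hv' => ?_
    have hu := habs.mem_of_posHist_of_visitsT hr hv'
    exact habs.eq_of_δ_ne_zero hu hδ ▸ hu

variable (M) in
@[simp]
theorem mem_updateF {U : Finset S} {z : Z} {a : A} {t : S} :
    t ∈ M.updateF U z a ↔ M.obs t = z ∧ ∃ s ∈ U, 0 < M.δ s a t := by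
  simp [updateF]

theorem obs_of_mem_beliefOfFromAux {U0 : Finset S} :
    ∀ {s : S} {l : List (A × S)} {u : S}, u ∈ M.beliefOfFromAux U0 s l → M.obs u = M.obs s
  | _, [], _, h => (mem_filter.mp h).2
  | _, (_, _) :: _, _, h => ((M.mem_updateF).mp h).1

theorem beliefOfFromAux_nil_of_mem {U0 : Finset S} (hU0 : ∀ s ∈ U0, ∀ s' ∈ U0, M.obs s = M.obs s')
    {s : S} (hs : s ∈ U0) : M.beliefOfFromAux U0 s [] = U0 :=
  filter_true_of_mem fun t ht => hU0 t ht s hs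

theorem mem_beliefOfFromAux_self {U0 : Finset S} (hU0 : ∀ s, M.init s ≠ 0 → s ∈ U0) :
    ∀ {s : S} {l : List (A × S)}, M.PosHist σ (s, l) → s ∈ M.beliefOfFromAux U0 s l
  | s, [], hpos => mem_filter.mpr ⟨hU0 s (posHist_nil.mp hpos), rfl⟩
  | s, (a, u) :: r, hpos => by
    obtain ⟨hr, -, hδ⟩ := posHist_cons.mp hpos
    exact (M.mem_updateF).mpr ⟨rfl, u, mem_beliefOfFromAux_self hU0 hr,
      (M.δ_nonneg u a s).lt_of_ne' hδ⟩

theorem mem_suppInitF {s : S} : s ∈ M.suppInitF ↔ M.init s ≠ 0 := by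
  simp [suppInitF, (M.init_nonneg s).lt_iff_ne']

theorem mem_beliefOf_self {s : S} {l : List (A × S)} (hpos : M.PosHist σ (s, l)) :
    s ∈ M.beliefOf (s, l) :=
  mem_beliefOfFromAux_self (fun _ => mem_suppInitF.mpr) hpos

variable (M) in
theorem beliefOfFromAux_append (U0 : Finset S) (l₀ : List (A × S)) :
    ∀ (s : S) (l : List (A × S)), M.beliefOfFromAux U0 s (l ++ l₀) =
      M.beliefOfFromAux (M.beliefOfFromAux U0 (startOf s l) l₀) s l
  | _, [] => (filter_true_of_mem fun _ hu => obs_of_mem_beliefOfFromAux hu).symm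
  | s, (a, u) :: r => congrArg (M.updateF · (M.obs s) a) (beliefOfFromAux_append U0 l₀ u r)

theorem exists_posHist_of_mem_beliefOf :
    ∀ {s : S} {l : List (A × S)} {t : S}, M.PosHist σ (s, l) →
      t ∈ M.beliefOf (s, l) →
      ∃ l', obsHist M.obs (t, l') = obsHist M.obs (s, l) ∧ M.PosHist σ (t, l')
  | s, [], t, _, ht => by
    obtain ⟨ht, hobs⟩ := mem_filter.mp ht
    exact ⟨[], by simp [obsHist, hobs], posHist_nil.mpr (mem_suppInitF.mp ht)⟩
  | s, (a, u) :: r, t, hpos, ht => by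
    obtain ⟨hr, ha, -⟩ := posHist_cons.mp hpos
    obtain ⟨hobs, u', hu', hδ⟩ := (M.mem_updateF).mp ht
    obtain ⟨l', hobs', hpos'⟩ := exists_posHist_of_mem_beliefOf hr hu'
    simp only [obsHist, Prod.mk.injEq] at hobs'
    refine ⟨(a, u') :: l', by simp [obsHist, hobs, hobs'], posHist_cons.mpr ⟨hpos', ?_, hδ.ne'⟩⟩
    rwa [σ.obsBased (u', l') (u, r) (by simp [obsHist, hobs'])]

theorem uniformS_ne_zero {U : Finset S} {s : S} (hs : s ∈ U) : uniformS U s ≠ 0 := by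
  simp [uniformS, hs, card_ne_zero_of_mem hs]

theorem beliefOfFromAux_congr {M' : POMDP S A Z} (hobs : M'.obs = M.obs) (hδ : M'.δ = M.δ)
    (U0 : Finset S) : ∀ (s : S) (l : List (A × S)),
      M'.beliefOfFromAux U0 s l = M.beliefOfFromAux U0 s l
  | s, [] => by simp only [beliefOfFromAux, hobs]
  | s, (a, u) :: r => by
    simp only [beliefOfFromAux, updateF, hobs, hδ, beliefOfFromAux_congr hobs hδ U0 u r]

theorem suppInitF_reinit {U : Finset S} (hU : U.Nonempty)
    (hobs : ∀ s ∈ U, ∀ s' ∈ U, M.obs s = M.obs s') : (M.reinit U hU hobs).suppInitF = U := by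
  ext s
  simp only [suppInitF, mem_filter, mem_univ, true_and]
  exact ⟨uniformS_mem, fun hs => (uniformS_nonneg U s).lt_of_ne' (uniformS_ne_zero hs)⟩

theorem beliefOf_mem_beliefWin (habs : M.Absorbing T)
    (hw : Tendsto (M.probAvoidBy T σ) atTop (𝓝 0)) {s : S} {l : List (A × S)}
    (hpos : M.PosHist σ (s, l)) : M.beliefOf (s, l) ∈ M.BeliefWin T := by
  set B := M.beliefOf (s, l)
  have hB : ∀ x ∈ B, ∀ y ∈ B, M.obs x = M.obs y := fun x hx y hy =>
    (obs_of_mem_beliefOfFromAux hx).trans (obs_of_mem_beliefOfFromAux hy).symm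
  refine ⟨⟨s, mem_beliefOf_self hpos⟩, hB, shiftStrat σ l, ?_⟩
  rw [almostSure_iff_tendsto, tendsto_probAvoidBy_iff_resetDirac]
  intro t ht
  obtain ⟨l', hobs, hpos'⟩ :=
    exists_posHist_of_mem_beliefOf hpos (uniformS_mem ((uniformS_nonneg B t).lt_of_ne' ht))
  change Tendsto ((M.resetDirac t).probAvoidBy T (shiftStrat σ l)) atTop (𝓝 0)
  rw [shiftStrat_congr σ (congrArg Prod.snd hobs).symm]
  by_cases htT : t ∈ T
  · exact tendsto_const_nhds.congr fun n => (probAvoidBy_resetDirac_of_mem htT n).symm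
  · exact tendsto_probAvoidBy_shiftStrat (h := (t, l')) hw hpos'
      fun hv => htT (habs.mem_of_posHist_of_visitsT hpos' hv)

theorem mem_allowSet_of_act_ne_zero (habs : M.Absorbing T)
    (hw : Tendsto (M.probAvoidBy T σ) atTop (𝓝 0)) {s : S} {l : List (A × S)}
    (hpos : M.PosHist σ (s, l)) {a : A} (ha : σ.act (s, l) a ≠ 0) :
    a ∈ M.AllowSet T (M.beliefOf (s, l)) := by
  rintro z ⟨t, ht⟩
  obtain ⟨rfl, u, hu, hδ⟩ := (M.mem_updateF).mp ht
  obtain ⟨l', hobs, hpos'⟩ := exists_posHist_of_mem_beliefOf hpos hu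
  have ha' : σ.act (u, l') a ≠ 0 := by rwa [σ.obsBased (u, l') (s, l) hobs]
  simp only [obsHist, Prod.mk.injEq] at hobs
  have hwin := beliefOf_mem_beliefWin habs hw
    (posHist_cons.mpr ⟨hpos', ha', hδ.ne'⟩ : M.PosHist σ (t, (a, u) :: l'))
  change M.updateF (M.beliefOfFromAux _ u l') (M.obs t) a ∈ _ at hwin
  rwa [beliefOfFromAux_obs M _ l' l u s hobs.2 hobs.1] at hwin

theorem mem_allowSet_of_almostSure_reinit (habs : M.Absorbing T) {B : Finset S}
    {hne : B.Nonempty} {hobs : ∀ s ∈ B, ∀ s' ∈ B, M.obs s = M.obs s'} {σB : Strategy S A Z M.obs}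
    (hσB : (M.reinit B hne hobs).AlmostSure T σB) {t : S} (ht : t ∈ B) {s : S}
    {l : List (A × S)} (hpos : (M.resetDirac t).PosHist σB (s, l)) {a : A}
    (ha : σB.act (s, l) a ≠ 0) : a ∈ M.AllowSet T (M.beliefOfFromAux B s l) := by
  have := mem_allowSet_of_act_ne_zero (M := M.reinit B hne hobs) habs
    (almostSure_iff_tendsto.mp hσB)
    (PosHist.of_resetDirac (M := M.reinit B hne hobs) (uniformS_ne_zero ht) hpos) ha
  rwa [beliefOf, beliefOfFrom, suppInitF_reinit,
    beliefOfFromAux_congr (M := M) (M' := M.reinit B hne hobs) rfl rfl] at this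

theorem allowFin_nonempty (habs : M.Absorbing T) {B : Finset S} (hB : B ∈ M.BeliefWin T) :
    (M.allowFin T B).Nonempty := by
  obtain ⟨hne, hobs, σB, hσB⟩ := hB
  obtain ⟨t, ht⟩ := id hne
  obtain ⟨a, ha⟩ : ∃ a, σB.act (t, []) a ≠ 0 := by
    by_contra! h
    simpa [h] using σB.act_sum (t, [])
  have := mem_allowSet_of_almostSure_reinit habs hσB ht (posHist_nil.mpr (by simp)) ha
  rw [beliefOfFromAux_nil_of_mem hobs ht] at this
  exact ⟨a, mem_filter.mpr ⟨mem_univ a, this⟩⟩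

end BeliefSupports

section InformationStates

variable {M : POMDP S A Z}

-- If `∑ u, f u = 0` then `f = 0`, and also `normalize f = 0` since `x / 0 = 0`.
theorem suppF_normalize {f : S → ℝ} (hf : ∀ t, 0 ≤ f t) :
    suppF (normalize f) = univ.filter fun t => f t ≠ 0 := by
  by_cases h0 : ∑ u, f u = 0
  · have hz := (Fintype.sum_eq_zero_iff_of_nonneg hf).mp h0
    simp [suppF, normalize, hz]
  · ext t
    simp [suppF, normalize, h0]

variable (M) in
theorem infoOfAux_nonneg : ∀ (s : S) (l : List (A × S)) (t : S), 0 ≤ M.infoOfAux s l t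
  | s, [], t => div_nonneg (by dsimp only; split_ifs <;> simp [M.init_nonneg])
      (sum_nonneg fun u _ => by split_ifs <;> simp [M.init_nonneg])
  | s, (a, w) :: r, t => by
    have hf : ∀ t, 0 ≤ if M.obs t = M.obs s then ∑ u, M.infoOfAux w r u * M.δ u a t else 0 :=
      fun t => by
        split_ifs
        exacts [sum_nonneg fun u _ => mul_nonneg (infoOfAux_nonneg w r u) (M.δ_nonneg ..), le_rfl]
    exact div_nonneg (hf t) (sum_nonneg fun u _ => hf u)

theorem suppF_infoOfAux : ∀ (s : S) (l : List (A × S)),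
    suppF (M.infoOfAux s l) = M.beliefOfFromAux M.suppInitF s l
  | s, [] => by
    rw [infoOfAux, suppF_normalize fun t => by split_ifs <;> simp [M.init_nonneg]]
    ext t
    simp only [mem_filter, mem_univ, true_and, ne_eq, ite_eq_right_iff, not_forall, beliefOfFromAux,
      suppInitF, (M.init_nonneg t).lt_iff_ne']
    tauto
  | s, (a, w) :: r => by
    rw [infoOfAux, suppF_normalize fun t => by
      split_ifs
      exacts [sum_nonneg fun u _ => mul_nonneg (M.infoOfAux_nonneg w r u) (M.δ_nonneg ..), le_rfl]]
    ext t
    simp only [beliefOfFromAux, mem_filter, mem_univ, true_and, mem_updateF, ← suppF_infoOfAux w r,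
      suppF, ne_eq, ite_eq_right_iff, not_forall]
    have hδ : ∀ u, 0 < M.δ u a t ↔ M.δ u a t ≠ 0 := fun u => (M.δ_nonneg u a t).lt_iff_ne'
    rw [Finset.sum_eq_zero_iff_of_nonneg fun u _ =>
      mul_nonneg (M.infoOfAux_nonneg w r u) (M.δ_nonneg ..)]
    simp only [mem_univ, true_implies, not_forall, mul_eq_zero, not_or, hδ, exists_prop]

end InformationStates

section AllowedActions

variable {M : POMDP S A Z} {T : Set S}

theorem mem_allowFin {U : Finset S} {a : A} : a ∈ M.allowFin T U ↔ a ∈ M.AllowSet T U := by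
  simp [allowFin]

theorem uniformA_ne_zero_iff {F : Finset A} {a : A} : uniformA F a ≠ 0 ↔ a ∈ F := by
  by_cases ha : a ∈ F
  · simp [uniformA, ha, ne_empty_of_mem ha]
  · simp [uniformA, ha]

theorem actAllowFrom_ne_zero_iff {U0 : Finset S} {h : Hist S A} {a : A}
    (hne : (M.allowFin T (M.beliefOfFrom U0 h)).Nonempty) :
    M.actAllowFrom T U0 h a ≠ 0 ↔ a ∈ M.allowFin T (M.beliefOfFrom U0 h) := by
  rw [actAllowFrom, if_pos hne, uniformA_ne_zero_iff]

variable (M T) in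
def PlaysAllowed (U0 : Finset S) (σ : Strategy S A Z M.obs) : Prop :=
  ∀ h : Hist S A, M.beliefOfFrom U0 h ∈ M.BeliefWin T →
    ∀ a, σ.act h a ≠ 0 → a ∈ M.AllowSet T (M.beliefOfFrom U0 h)

theorem PlaysAllowed.resetDirac {U0 : Finset S} {σ : Strategy S A Z M.obs}
    (hσ : M.PlaysAllowed T U0 σ) (t : S) : (M.resetDirac t).PlaysAllowed T U0 σ := by
  intro h
  simp only [beliefOfFrom, beliefOfFromAux_congr (M := M) (M' := M.resetDirac t) rfl rfl]
  exact hσ h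

theorem PlaysAllowed.beliefOfFromAux_mem_beliefWin {U0 : Finset S} {σ : Strategy S A Z M.obs}
    (hσ : M.PlaysAllowed T U0 σ) (hU0 : U0 ∈ M.BeliefWin T) (hinit : ∀ s, M.init s ≠ 0 → s ∈ U0) :
    ∀ {s : S} {l : List (A × S)}, M.PosHist σ (s, l) → M.beliefOfFromAux U0 s l ∈ M.BeliefWin T
  | s, [], hpos => by
    rwa [beliefOfFromAux_nil_of_mem hU0.2.1 (hinit s (posHist_nil.mp hpos))]
  | s, (a, u) :: r, hpos => by
    obtain ⟨hr, ha, hδ⟩ := posHist_cons.mp hpos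
    have hu := mem_beliefOfFromAux_self hinit hr
    exact hσ (u, r) (hσ.beliefOfFromAux_mem_beliefWin hU0 hinit hr) a ha (M.obs s)
      ⟨s, (M.mem_updateF).mpr ⟨rfl, u, hu, (M.δ_nonneg u a s).lt_of_ne' hδ⟩⟩

variable [Nonempty A]

theorem playsAllowed_stratAllowFrom (habs : M.Absorbing T) (U0 : Finset S) :
    M.PlaysAllowed T U0 (M.stratAllowFrom T U0) :=
  fun _ hB _ ha => mem_allowFin.mp ((actAllowFrom_ne_zero_iff (allowFin_nonempty habs hB)).mp ha)

theorem foAct_mem_allowFin {c : S → A → ℝ} {n : ℕ} {b : S → ℝ}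
    (hb : (M.allowFin T (suppF b)).Nonempty) : M.foAct T c (n + 1) b ∈ M.allowFin T (suppF b) := by
  rw [foAct, dif_pos hb]
  exact (Classical.choose_spec (exists_mem_eq_inf' hb _)).1

theorem playsAllowed_stratStar (habs : M.Absorbing T) (c : S → A → ℝ) (k : ℕ) :
    M.PlaysAllowed T M.suppInitF (M.stratStar T c k) := by
  intro h hB a ha
  have hne := allowFin_nonempty habs hB
  by_cases hk : h.2.length < k
  · obtain ⟨j, hj⟩ : ∃ j, k - h.2.length = j + 1 := ⟨k - h.2.length - 1, by omega⟩
    have hsupp : suppF (M.infoOf h) = M.beliefOfFrom M.suppInitF h := suppF_infoOfAux h.1 h.2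
    obtain rfl : a = M.foAct T c (j + 1) (M.infoOf h) := by
      by_contra hne'
      simp [stratStar, hk, actFO, hj, hne'] at ha
    rw [← hsupp, ← mem_allowFin]
    exact foAct_mem_allowFin (hsupp ▸ hne)
  · have hact : (M.stratStar T c k).act h = M.actAllowFrom T M.suppInitF h := if_neg hk
    rw [hact] at ha
    exact mem_allowFin.mp ((actAllowFrom_ne_zero_iff hne).mp ha)

end AllowedActions

section StratAllow

variable [Nonempty A] {M : POMDP S A Z} {T : Set S}

-- An almost-sure winning strategy only plays allowed actions, and `σ_Allow` plays all of them.
theorem posHist_stratAllowFrom_of_almostSure (habs : M.Absorbing T) {B : Finset S}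
    {hne : B.Nonempty} {hobs : ∀ s ∈ B, ∀ s' ∈ B, M.obs s = M.obs s'} {σB : Strategy S A Z M.obs}
    (hσB : (M.reinit B hne hobs).AlmostSure T σB) {t : S} (ht : t ∈ B) :
    ∀ {s : S} {l : List (A × S)}, (M.resetDirac t).PosHist σB (s, l) →
      (M.resetDirac t).PosHist (M.stratAllowFrom T B) (s, l)
  | _, [], hpos => posHist_nil.mpr (posHist_nil.mp hpos)
  | _, (a, u) :: r, hpos => by
    obtain ⟨hr, ha, hδ⟩ := posHist_cons.mp hpos
    have hallow : a ∈ M.allowFin T (M.beliefOfFrom B (u, r)) :=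
      mem_allowFin.mpr (mem_allowSet_of_almostSure_reinit habs hσB ht hr ha)
    exact posHist_cons.mpr ⟨posHist_stratAllowFrom_of_almostSure habs hσB ht hr,
      (actAllowFrom_ne_zero_iff ⟨a, hallow⟩).mpr hallow, hδ⟩

theorem exists_probAvoidBy_stratAllowFrom_lt_one (habs : M.Absorbing T) {B : Finset S}
    (hB : B ∈ M.BeliefWin T) {t : S} (ht : t ∈ B) :
    ∃ n, (M.resetDirac t).probAvoidBy T (M.stratAllowFrom T B) n < 1 := by
  obtain ⟨hne, hobs, σB, hσB⟩ := hB
  have hw : Tendsto ((M.resetDirac t).probAvoidBy T σB) atTop (𝓝 0) :=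
    tendsto_probAvoidBy_iff_resetDirac.mp (almostSure_iff_tendsto.mp hσB) t (uniformS_ne_zero ht)
  obtain ⟨n, hn⟩ := (hw.eventually (gt_mem_nhds one_pos)).exists
  obtain ⟨h, hh, hv, hpos⟩ := probAvoidBy_lt_one_iff.mp hn
  exact ⟨n, probAvoidBy_lt_one_iff.mpr
    ⟨h, hh, hv, posHist_stratAllowFrom_of_almostSure habs hσB ht hpos⟩⟩

theorem exists_probAvoidBy_stratAllowFrom_le (habs : M.Absorbing T) :
    ∃ N : ℕ, ∃ p : ℝ, 0 ≤ p ∧ p < 1 ∧ ∀ B ∈ M.BeliefWin T, ∀ t ∈ B,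
      (M.resetDirac t).probAvoidBy T (M.stratAllowFrom T B) N ≤ p := by
  obtain ⟨N, p, hp0, hp1, hp⟩ := exists_uniform_lt_one
    (P := fun i : Finset S × S => i.1 ∈ M.BeliefWin T ∧ i.2 ∈ i.1)
    (f := fun i => (M.resetDirac i.2).probAvoidBy T (M.stratAllowFrom T i.1))
    (fun _ => probAvoidBy_antitone ..)
    (fun i hi => exists_probAvoidBy_stratAllowFrom_lt_one habs hi.1 hi.2)
  exact ⟨N, p, hp0, hp1, fun B hB t ht => hp (B, t) ⟨hB, ht⟩⟩

theorem probAvoidBy_shiftStrat_stratAllowFrom (U0 : Finset S) (h : Hist S A) (m : ℕ) :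
    (M.resetDirac h.1).probAvoidBy T (shiftStrat (M.stratAllowFrom T U0) h.2) m =
      (M.resetDirac h.1).probAvoidBy T (M.stratAllowFrom T (M.beliefOfFrom U0 h)) m := by
  refine probAvoidBy_resetDirac_congr (fun s l hst => ?_) m
  change M.actAllowFrom T U0 (s, l ++ h.2) = M.actAllowFrom T (M.beliefOfFrom U0 h) (s, l)
  rw [actAllowFrom, actAllowFrom, beliefOfFrom, beliefOfFrom, beliefOfFrom,
    beliefOfFromAux_append, hst]

theorem mem_beliefWin_of_posHist_stratAllowFrom (habs : M.Absorbing T) {B : Finset S}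
    (hB : B ∈ M.BeliefWin T) {t : S} (ht : t ∈ B) {s : S} {l : List (A × S)}
    (hpos : (M.resetDirac t).PosHist (M.stratAllowFrom T B) (s, l)) :
    M.beliefOfFromAux B s l ∈ M.BeliefWin T ∧ s ∈ M.beliefOfFromAux B s l := by
  have hinit : ∀ s, (M.resetDirac t).init s ≠ 0 → s ∈ B := fun s hs => by
    simp_all
  rw [← beliefOfFromAux_congr (M := M) (M' := M.resetDirac t) rfl rfl]
  exact ⟨((playsAllowed_stratAllowFrom habs B).resetDirac t).beliefOfFromAux_mem_beliefWin hB
    hinit hpos, mem_beliefOfFromAux_self hinit hpos⟩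

theorem probAvoidBy_stratAllowFrom_le_pow (habs : M.Absorbing T) {N : ℕ} {p : ℝ} (hp0 : 0 ≤ p)
    (hp : ∀ B ∈ M.BeliefWin T, ∀ t ∈ B,
      (M.resetDirac t).probAvoidBy T (M.stratAllowFrom T B) N ≤ p)
    {B : Finset S} (hB : B ∈ M.BeliefWin T) {t : S} (ht : t ∈ B) :
    ∀ m : ℕ, (M.resetDirac t).probAvoidBy T (M.stratAllowFrom T B) (m * N) ≤ p ^ m
  | 0 => by simpa using probAvoidBy_le_one ..
  | m + 1 => by
    calc (M.resetDirac t).probAvoidBy T (M.stratAllowFrom T B) ((m + 1) * N)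
        = (M.resetDirac t).probAvoidBy T (M.stratAllowFrom T B) (N + m * N) := by ring_nf
      _ ≤ p * (M.resetDirac t).probAvoidBy T (M.stratAllowFrom T B) (m * N) := by
        refine probAvoidBy_add_le_mul fun h _ hpos _ => ?_
        obtain ⟨hB', hh⟩ := mem_beliefWin_of_posHist_stratAllowFrom habs hB ht hpos
        exact (probAvoidBy_shiftStrat_stratAllowFrom B h N).trans_le (hp _ hB' h.1 hh)
      _ ≤ p * p ^ m := mul_le_mul_of_nonneg_left
        (probAvoidBy_stratAllowFrom_le_pow habs hp0 hp hB ht m) hp0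
      _ = p ^ (m + 1) := (pow_succ' p m).symm

theorem shiftStrat_stratStar (c : S → A → ℝ) {k : ℕ} {l₀ : List (A × S)} (hk : k ≤ l₀.length) :
    shiftStrat (M.stratStar T c k) l₀ = shiftStrat (M.stratAllowFrom T M.suppInitF) l₀ := by
  ext : 1
  funext h
  simp only [shiftStrat_act, stratStar, List.length_append, stratAllowFrom]
  rw [if_neg (by omega)]

end StratAllow

end POMDP

theorem stratStar_almostSure_general
    {S A Z : Type} [Fintype S] [Fintype A] [Fintype Z] [Nonempty A]
    (M : POMDP S A Z) (T : Set S) (c : S → A → ℝ)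
    (habs : M.Absorbing T)
    (hinit : M.suppInitF ∈ M.BeliefWin T)
    (k : ℕ) :
    M.AlmostSure T (M.stratStar T c k) := by
  open POMDP in
  obtain ⟨N, p, hp0, hp1, hp⟩ := exists_probAvoidBy_stratAllowFrom_le habs
  have hdecay : ∀ m, M.probAvoidBy T (M.stratStar T c k) (m * N + k) ≤ p ^ m := fun m => by
    refine (probAvoidBy_add_le_mul fun h hh hpos _ => ?_).trans
      (mul_le_of_le_one_right (pow_nonneg hp0 m) (probAvoidBy_le_one ..))
    have hB := (playsAllowed_stratStar habs c k).beliefOfFromAux_mem_beliefWin hinit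
      (fun _ => mem_suppInitF.mpr) hpos
    rw [shiftStrat_stratStar c (mem_histN.mp hh).ge, probAvoidBy_shiftStrat_stratAllowFrom]
    exact probAvoidBy_stratAllowFrom_le_pow habs hp0 hp hB (mem_beliefOf_self hpos) m
  exact almostSure_iff_tendsto.mpr (tendsto_zero_of_antitone_of_le (probAvoidBy_antitone ..)
    (fun _ => probAvoidBy_nonneg ..) (tendsto_pow_atTop_nhds_zero_of_lt_one hp0 hp1) hdecay)

/-- For every `k`, the strategy `σ*_k` (play the
allowed-action-restricted finite-horizon optimal strategy `σFO_k` for `k`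
steps, then `σ_Allow`) is almost-sure winning for `Reach(T)`. -/
theorem stratStar_almostSure
    {S A Z : Type} [Fintype S] [Fintype A] [Fintype Z] [Nonempty A]
    (M : POMDP S A Z) (T : Set S) (c : S → A → ℝ)
    (habs : M.Absorbing T)
    (hc0 : ∀ t ∈ T, ∀ a, c t a = 0)
    (hc1 : ∀ s ∉ T, ∀ a, 1 ≤ c s a)
    (hinit : M.suppInitF ∈ M.BeliefWin T)
    (k : ℕ) :
    M.AlmostSure T (M.stratStar T c k) :=
  stratStar_almostSure_general M T c habs hinit k
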